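/- arXiv:2112.10180 — 6 statements merged into one kernel-verified Lean document; each statement's English description precedes it below -/
import Mathlib

section
/- The Step out–Step in sequencing game has a nonempty core: there exists x ∈ ℝ^N with Σ_{i∈N} x_i = v(N) and Σ_{i∈S} x_i ≥ v(S) for every coalition S ⊆ N. -/
/-- Completion cost `C_j(σ) = w_j · Σ_{k : σ(k) ≤ σ(j)} p_k` of player `j` under order `σ`. -/
noncomputable def playerCost {n : ℕ} (p w : Fin n → ℝ) (σ : Equiv.Perm (Fin n)) (j : Fin n) : ℝ :=
  w j * ∑ k ∈ Finset.univ.filter (fun k => σ k ≤ σ j), p k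

/-- Total cost `C_S(σ)` of coalition `S` under order `σ`. -/
noncomputable def coalCost {n : ℕ} (p w : Fin n → ℝ) (S : Finset (Fin n))
    (σ : Equiv.Perm (Fin n)) : ℝ :=
  ∑ j ∈ S, playerCost p w σ j

/-- `σ` is admissible for coalition `S` (w.r.t. initial order `σ0`): no player outside `S`
may be overtaken. -/
def Admissible {n : ℕ} (σ0 : Equiv.Perm (Fin n)) (S : Finset (Fin n))
    (σ : Equiv.Perm (Fin n)) : Prop :=
  ∀ i j : Fin n, i ∉ S → σ0 i ≤ σ0 j → σ i ≤ σ j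

/-- The value `v(S) = C_S(σ0) − min{C_S(σ) : σ admissible for S}` of coalition `S`
in the SoSi sequencing game. -/
noncomputable def sosiValue {n : ℕ} (p w : Fin n → ℝ) (σ0 : Equiv.Perm (Fin n))
    (S : Finset (Fin n)) : ℝ :=
  coalCost p w S σ0 - sInf {c : ℝ | ∃ σ : Equiv.Perm (Fin n), Admissible σ0 S σ ∧ coalCost p w S σ = c}

/-!
If `k` precedes `j`, player `j` pays `w j * p k` for `k`; with `j` first, `k` pays `w k * p j`
instead. So a coalition gains at most `max 0 (w j * p k - w k * p j)` on a pair of its members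
with `k` initially first, and nothing on the costs its members pay for an outsider, because an
outsider keeps everybody initially behind him behind him. Thus `v(S)` is at most the total pair
gain inside `S`. Smith's rule (decreasing `w / p`) realises every pair gain at once, so `v(N)` is
the total pair gain, and handing each pair gain to the later player of the pair is a core
allocation.
-/

open Finset

theorem Finset.sum_sum_le_sum_sum_of_add_swap_le {ι M : Type*} [AddCommMonoid M] [LinearOrder M]
    [IsOrderedCancelAddMonoid M] (s : Finset ι) {F G : ι → ι → M}
    (h : ∀ j k, F j k + F k j ≤ G j k + G k j) :
    ∑ j ∈ s, ∑ k ∈ s, F j k ≤ ∑ j ∈ s, ∑ k ∈ s, G j k := by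
  have hsym : ∀ H : ι → ι → M,
      2 • ∑ j ∈ s, ∑ k ∈ s, H j k = ∑ j ∈ s, ∑ k ∈ s, (H j k + H k j) := fun H => by
    simp only [sum_add_distrib, two_nsmul, sum_comm (s := s) (f := fun k j => H j k)]
  refine le_of_nsmul_le_nsmul_right two_ne_zero ?_
  rw [hsym, hsym]
  exact sum_le_sum fun j _ => sum_le_sum fun k _ => h j k

theorem Tuple.exists_perm_lt_of_lt {n : ℕ} {α : Type*} [LinearOrder α] (f : Fin n → α) :
    ∃ σ : Equiv.Perm (Fin n), ∀ j k, f j < f k → σ j < σ k := by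
  refine ⟨(Tuple.sort f)⁻¹, fun j k hjk => lt_of_not_ge fun hkj => hjk.not_ge ?_⟩
  simpa using Tuple.monotone_sort f hkj

section

variable {n : ℕ} (p w : Fin n → ℝ)

noncomputable def pairCost (σ : Equiv.Perm (Fin n)) (j k : Fin n) : ℝ :=
  if σ k ≤ σ j then w j * p k else 0

/-- What `j` can save by overtaking `k`, provided `k` precedes `j` in `σ0`. -/
noncomputable def pairGain (σ0 : Equiv.Perm (Fin n)) (k j : Fin n) : ℝ :=
  if σ0 k < σ0 j then max 0 (w j * p k - w k * p j) else 0

/-- Smith's rule: players are served in decreasing order of `w / p`. -/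
def IsSmithOrder (σ : Equiv.Perm (Fin n)) : Prop :=
  ∀ j k, σ j < σ k → w k * p j ≤ w j * p k

variable {p w}

theorem pairGain_nonneg (σ0 : Equiv.Perm (Fin n)) (k j : Fin n) : 0 ≤ pairGain p w σ0 k j := by
  unfold pairGain
  split_ifs
  exacts [le_max_left _ _, le_rfl]

theorem coalCost_eq_sum_pairCost (S : Finset (Fin n)) (σ : Equiv.Perm (Fin n)) :
    coalCost p w S σ = ∑ j ∈ S, ∑ k, pairCost p w σ j k := by
  simp only [coalCost, playerCost, pairCost, mul_sum, sum_filter, mul_ite, mul_zero]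

theorem pairCost_add_pairCost {σ : Equiv.Perm (Fin n)} {j k : Fin n} (hjk : j ≠ k) :
    pairCost p w σ j k + pairCost p w σ k j = if σ k < σ j then w j * p k else w k * p j := by
  have hσ : σ k ≠ σ j := fun h => hjk (σ.injective h).symm
  unfold pairCost
  rcases hσ.lt_or_gt with h | h
  · simp [h.le, h, h.not_ge]
  · simp [h.le, h.not_gt, h.not_ge]

theorem pairCost_add_pairCost_of_isSmithOrder {σ : Equiv.Perm (Fin n)}
    (hσ : IsSmithOrder p w σ) {j k : Fin n} (hjk : j ≠ k) :
    pairCost p w σ j k + pairCost p w σ k j = min (w j * p k) (w k * p j) := by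
  rw [pairCost_add_pairCost hjk]
  rcases (σ.injective.ne hjk).lt_or_gt with h | h
  · simp [h.not_gt, hσ j k h]
  · simp [h, hσ k j h]

theorem pairCost_add_pairCost_eq_min_add_pairGain (σ0 : Equiv.Perm (Fin n)) {j k : Fin n}
    (hjk : j ≠ k) :
    pairCost p w σ0 j k + pairCost p w σ0 k j
      = min (w j * p k) (w k * p j) + (pairGain p w σ0 k j + pairGain p w σ0 j k) := by
  rw [pairCost_add_pairCost hjk]
  unfold pairGain
  rcases (σ0.injective.ne hjk).lt_or_gt with h | h <;>
    rcases le_total (w j * p k) (w k * p j) with e | e <;>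
    simp [h, h.not_gt, e, sub_nonpos.mpr e, sub_nonneg.mpr e]

theorem pairCost_sub_le_pairGain (σ0 σ : Equiv.Perm (Fin n)) (j k : Fin n) :
    (pairCost p w σ0 j k - pairCost p w σ j k) + (pairCost p w σ0 k j - pairCost p w σ k j)
      ≤ pairGain p w σ0 k j + pairGain p w σ0 j k := by
  rcases eq_or_ne j k with rfl | hjk
  · simp [pairGain, pairCost]
  have hmin := pairCost_add_pairCost_eq_min_add_pairGain (p := p) (w := w) σ0 hjk
  have hσ : min (w j * p k) (w k * p j) ≤ pairCost p w σ j k + pairCost p w σ k j := by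
    rw [pairCost_add_pairCost hjk]
    split_ifs
    exacts [min_le_left _ _, min_le_right _ _]
  linarith

theorem pairGain_le_pairCost_sub_of_isSmithOrder (σ0 : Equiv.Perm (Fin n))
    {σ : Equiv.Perm (Fin n)} (hσ : IsSmithOrder p w σ) (j k : Fin n) :
    pairGain p w σ0 k j + pairGain p w σ0 j k
      ≤ (pairCost p w σ0 j k - pairCost p w σ j k) + (pairCost p w σ0 k j - pairCost p w σ k j) := by
  rcases eq_or_ne j k with rfl | hjk
  · simp [pairGain, pairCost]
  have := pairCost_add_pairCost_eq_min_add_pairGain (p := p) (w := w) σ0 hjk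
  have := pairCost_add_pairCost_of_isSmithOrder hσ hjk
  linarith

theorem pairCost_le_of_admissible (hp : ∀ i, 0 ≤ p i) (hw : ∀ i, 0 ≤ w i)
    {σ0 σ : Equiv.Perm (Fin n)} {S : Finset (Fin n)} (hσ : Admissible σ0 S σ) {k : Fin n}
    (hk : k ∉ S) (j : Fin n) :
    pairCost p w σ0 j k ≤ pairCost p w σ j k := by
  unfold pairCost
  by_cases h : σ0 k ≤ σ0 j
  · simp [h, hσ k j hk h]
  · simp only [h, if_false]
    split_ifs
    exacts [mul_nonneg (hw j) (hp k), le_rfl]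

theorem coalCost_sub_coalCost_le_sum_pairGain (hp : ∀ i, 0 ≤ p i) (hw : ∀ i, 0 ≤ w i)
    {σ0 σ : Equiv.Perm (Fin n)} {S : Finset (Fin n)} (hσ : Admissible σ0 S σ) :
    coalCost p w S σ0 - coalCost p w S σ ≤ ∑ j ∈ S, ∑ k ∈ S, pairGain p w σ0 k j := by
  classical
  let F j k := pairCost p w σ0 j k - pairCost p w σ j k
  have houtside : ∀ j, ∑ k ∈ Sᶜ, F j k ≤ 0 := fun j =>
    sum_nonpos fun k hk => sub_nonpos.mpr (pairCost_le_of_admissible hp hw hσ (mem_compl.mp hk) j)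
  calc coalCost p w S σ0 - coalCost p w S σ
      = ∑ j ∈ S, (∑ k ∈ S, F j k + ∑ k ∈ Sᶜ, F j k) := by
        simp only [coalCost_eq_sum_pairCost, sum_add_sum_compl, F, ← sum_sub_distrib]
    _ ≤ ∑ j ∈ S, ∑ k ∈ S, F j k :=
        sum_le_sum fun j _ => add_le_of_nonpos_right (houtside j)
    _ ≤ ∑ j ∈ S, ∑ k ∈ S, pairGain p w σ0 k j :=
        sum_sum_le_sum_sum_of_add_swap_le S (pairCost_sub_le_pairGain σ0 σ)

theorem sum_pairGain_le_coalCost_sub_coalCost_of_isSmithOrder (σ0 : Equiv.Perm (Fin n))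
    {σ : Equiv.Perm (Fin n)} (hσ : IsSmithOrder p w σ) :
    ∑ j, ∑ k, pairGain p w σ0 k j ≤ coalCost p w univ σ0 - coalCost p w univ σ := by
  simp only [coalCost_eq_sum_pairCost, ← sum_sub_distrib]
  exact sum_sum_le_sum_sum_of_add_swap_le univ (pairGain_le_pairCost_sub_of_isSmithOrder σ0 hσ)

theorem exists_isSmithOrder (hp : ∀ i, 0 ≤ p i) (hw : ∀ i, 0 ≤ w i) :
    ∃ σ : Equiv.Perm (Fin n), IsSmithOrder p w σ := by
  -- `⊥` plays the role of an infinite ratio `w j / p j` when `p j = 0`.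
  let key : Fin n → WithBot ℝ := fun j => if p j = 0 then ⊥ else ((-(w j / p j) : ℝ) : WithBot ℝ)
  obtain ⟨σ, hσ⟩ := Tuple.exists_perm_lt_of_lt key
  refine ⟨σ, fun j k hjk => le_of_not_gt fun h => (hσ k j ?_).not_gt hjk⟩
  have hpj : 0 < p j := (hp j).lt_of_ne fun h0 => by
    rw [← h0, mul_zero] at h; exact h.not_ge (mul_nonneg (hw j) (hp k))
  simp only [key, hpj.ne', if_false]
  rcases (hp k).eq_or_lt with hpk | hpk
  · simp [← hpk, WithBot.bot_lt_coe]
  · rw [if_neg hpk.ne', WithBot.coe_lt_coe, neg_lt_neg_iff, div_lt_div_iff₀ hpj hpk]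
    linarith

theorem admissible_self (σ0 : Equiv.Perm (Fin n)) (S : Finset (Fin n)) :
    Admissible σ0 S σ0 :=
  fun _ _ _ h => h

theorem admissible_univ (σ0 σ : Equiv.Perm (Fin n)) : Admissible σ0 univ σ :=
  fun i _ hi => absurd (mem_univ i) hi

theorem coalCost_sub_coalCost_le_sosiValue {σ0 σ : Equiv.Perm (Fin n)} {S : Finset (Fin n)}
    (hσ : Admissible σ0 S σ) :
    coalCost p w S σ0 - coalCost p w S σ ≤ sosiValue p w σ0 S := by
  have hbdd : BddBelow {c : ℝ | ∃ σ, Admissible σ0 S σ ∧ coalCost p w S σ = c} :=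
    (Set.finite_range (coalCost p w S)).bddBelow.mono <| by
      rintro _ ⟨τ, -, rfl⟩
      exact ⟨τ, rfl⟩
  exact sub_le_sub_left (csInf_le hbdd ⟨σ, hσ, rfl⟩) _

theorem sosiValue_le_of_forall_admissible {σ0 : Equiv.Perm (Fin n)} {S : Finset (Fin n)} {B : ℝ}
    (h : ∀ σ, Admissible σ0 S σ → coalCost p w S σ0 - coalCost p w S σ ≤ B) :
    sosiValue p w σ0 S ≤ B := by
  rw [sosiValue, sub_le_comm]
  refine le_csInf ⟨_, σ0, admissible_self σ0 S, rfl⟩ ?_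
  rintro _ ⟨σ, hσ, rfl⟩
  exact sub_le_comm.mp (h σ hσ)

end

/-- The SoSi sequencing game has a nonempty core. -/
theorem sosi_core_nonempty {n : ℕ} (p w : Fin n → ℝ) (hp : ∀ i, 0 ≤ p i) (hw : ∀ i, 0 ≤ w i)
    (σ0 : Equiv.Perm (Fin n)) :
    ∃ x : Fin n → ℝ, (∑ i, x i = sosiValue p w σ0 Finset.univ) ∧
      ∀ S : Finset (Fin n), sosiValue p w σ0 S ≤ ∑ i ∈ S, x i := by
  have hvalue (S : Finset (Fin n)) :
      sosiValue p w σ0 S ≤ ∑ j ∈ S, ∑ k ∈ S, pairGain p w σ0 k j :=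
    sosiValue_le_of_forall_admissible fun _ hσ =>
      coalCost_sub_coalCost_le_sum_pairGain hp hw hσ
  obtain ⟨σ, hσ⟩ := exists_isSmithOrder hp hw
  refine ⟨fun j => ∑ k, pairGain p w σ0 k j, le_antisymm ?_ (hvalue univ), fun S => ?_⟩
  · exact (sum_pairGain_le_coalCost_sub_coalCost_of_isSmithOrder σ0 hσ).trans
      (coalCost_sub_coalCost_le_sosiValue (admissible_univ σ0 σ))
  · exact (hvalue S).trans (sum_le_sum fun j _ => sum_le_sum_of_subset_of_nonneg
      (subset_univ S) fun k _ _ => pairGain_nonneg σ0 k j)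
end

section
/- Let σ_alg be the order produced by the greedy algorithm for coalition S starting from σ0. Then any two players in the same component of S respect Smith's rule in σ_alg: if j, k ∈ S lie in the same component of S with respect to σ_alg and σ_alg(j) < σ_alg(k), then u_j ≥ u_k. -/
/-- `σ` is obtainable from `τ` by removing player `i` and reinserting it in the same or a
later position: the relative order of all other players is unchanged, and every player
preceding `i` still precedes `i`. -/
def MoveLater {n : ℕ} (i : Fin n) (τ σ : Equiv.Perm (Fin n)) : Prop :=
  (∀ x y : Fin n, x ≠ i → y ≠ i → (τ x < τ y ↔ σ x < σ y)) ∧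
    (∀ x : Fin n, τ x < τ i → σ x < σ i)

/-- One step of the greedy algorithm for coalition `S`: among all orders obtainable from `τ`
by moving `i` to the same or a later position, `σ` minimizes `C_S`, and among those it puts
`i` in the earliest possible position. -/
def GreedyStep {n : ℕ} (p w : Fin n → ℝ) (S : Finset (Fin n)) (i : Fin n)
    (τ σ : Equiv.Perm (Fin n)) : Prop :=
  MoveLater i τ σ ∧
    (∀ σ' : Equiv.Perm (Fin n), MoveLater i τ σ' → coalCost p w S σ ≤ coalCost p w S σ') ∧
    (∀ σ' : Equiv.Perm (Fin n), MoveLater i τ σ' →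
      coalCost p w S σ' = coalCost p w S σ → σ i ≤ σ' i)

/-- A run of the greedy algorithm for coalition `S` starting from the order `init`:
the players of `S` are enumerated from latest to earliest according to `init`, and each
is greedily moved to its best weakly-later position (ties broken by earliest position).
The greedy order is `τ (Fin.last m)`. -/
structure GreedyRun {n : ℕ} (p w : Fin n → ℝ) (init : Equiv.Perm (Fin n))
    (S : Finset (Fin n)) where
  /-- the number of players of `S` -/
  m : ℕ
  /-- the enumeration `i_1, …, i_m` of the players of `S` -/
  enum : Fin m → Fin n
  /-- the successive orders `τ_0, …, τ_m` -/
  τ : Fin (m + 1) → Equiv.Perm (Fin n)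
  enum_inj : Function.Injective enum
  enum_mem : ∀ j : Fin n, j ∈ S ↔ ∃ t : Fin m, enum t = j
  enum_desc : ∀ s t : Fin m, s < t → init (enum t) < init (enum s)
  τ_zero : τ 0 = init
  step : ∀ t : Fin m, GreedyStep p w S (enum t) (τ t.castSucc) (τ t.succ)

/-- The order produced by a run of the greedy algorithm. -/
def GreedyRun.alg {n : ℕ} {p w : Fin n → ℝ} {init : Equiv.Perm (Fin n)} {S : Finset (Fin n)}
    (run : GreedyRun p w init S) : Equiv.Perm (Fin n) :=
  run.τ (Fin.last run.m)

/-- `j` and `k` lie in the same component of `S` with respect to `σ`: both are in `S` and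
every player positioned (weakly) between them is in `S`. -/
def SameComponent {n : ℕ} (S : Finset (Fin n)) (σ : Equiv.Perm (Fin n)) (j k : Fin n) : Prop :=
  j ∈ S ∧ k ∈ S ∧
    ∀ x : Fin n, min (σ j) (σ k) ≤ σ x → σ x ≤ max (σ j) (σ k) → x ∈ S

/-! The greedy algorithm maintains a local form of Smith's rule: any two processed players in
adjacent positions are ordered by non-increasing urgency. An adjacent transposition of `a`
before `b` changes `C_S` by `w_a p_b - w_b p_a`, so when player `i` is moved, comparing its
chosen position with one step further and (if that neighbour was already processed, hence
after `i` before the move) one step back gives the inequality with both neighbours. Two other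
processed players that end up adjacent were adjacent before, since `i` preceded them all.
Along a component the rule then follows by chaining adjacent pairs. -/

open Finset

noncomputable def completionTime {n : ℕ} (p : Fin n → ℝ) (σ : Equiv.Perm (Fin n)) (j : Fin n) :
    ℝ :=
  ∑ k ∈ univ.filter (fun k => σ k ≤ σ j), p k

section AdjacentSwap

variable {n : ℕ} {σ : Equiv.Perm (Fin n)} {a b : Fin n}

theorem completionTime_of_covBy (p : Fin n → ℝ) (h : σ a ⋖ σ b) :
    completionTime p σ b = completionTime p σ a + p b := by
  have hfilter : univ.filter (fun k => σ k ≤ σ b) =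
      insert b (univ.filter (fun k => σ k ≤ σ a)) := by
    ext k
    simp [← h.lt_iff_le_left, le_iff_lt_or_eq, or_comm]
  rw [completionTime, hfilter, sum_insert (by simpa using h.lt), add_comm, completionTime]

theorem mul_swap_le_iff (h : σ a ⋖ σ b) {q : Fin n} (hq : q ≠ σ a) (k : Fin n) :
    (σ * Equiv.swap a b) k ≤ q ↔ σ k ≤ q := by
  rw [Fin.covBy_iff, Nat.covBy_iff_add_one_eq] at h
  simp only [Equiv.Perm.mul_apply]
  grind [Fin.le_def, Fin.val_inj]

theorem completionTime_mul_swap (p : Fin n → ℝ) (h : σ a ⋖ σ b) (j : Fin n) :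
    completionTime p (σ * Equiv.swap a b) j =
      completionTime p σ j + (if j = a then p b else 0) - (if j = b then p a else 0) := by
  have hab : a ≠ b := fun hab => h.ne (congrArg σ hab)
  have hunmoved : ∀ j ≠ b, completionTime p (σ * Equiv.swap a b) j =
      completionTime p σ (Equiv.swap a b j) := by
    intro j hj
    refine sum_congr ?_ fun _ _ => rfl
    have hpos : σ (Equiv.swap a b j) ≠ σ a := by
      rwa [Ne, σ.apply_eq_iff_eq, Equiv.swap_apply_eq_iff, Equiv.swap_apply_left]
    ext k
    simp only [mem_filter, mem_univ, true_and]
    exact mul_swap_le_iff h hpos k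
  have ha : completionTime p (σ * Equiv.swap a b) a = completionTime p σ a + p b := by
    rw [hunmoved a hab, Equiv.swap_apply_left, completionTime_of_covBy p h]
  by_cases hja : j = a
  · simp [hja, ha, hab]
  by_cases hjb : j = b
  · subst hjb
    have hcov : (σ * Equiv.swap a j) j ⋖ (σ * Equiv.swap a j) a := by simpa using h
    have h₁ := completionTime_of_covBy p hcov
    have h₂ := completionTime_of_covBy p h
    simp only [hja, if_false, if_true]
    linarith
  · simp [hunmoved j hjb, Equiv.swap_apply_of_ne_of_ne hja hjb, hja, hjb]

theorem coalCost_mul_swap (p w : Fin n → ℝ) {S : Finset (Fin n)} (ha : a ∈ S) (hb : b ∈ S)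
    (h : σ a ⋖ σ b) :
    coalCost p w S (σ * Equiv.swap a b) = coalCost p w S σ + w a * p b - w b * p a := by
  calc coalCost p w S (σ * Equiv.swap a b)
      = ∑ j ∈ S, (w j * completionTime p σ j + (if j = a then w a * p b else 0)
          - (if j = b then w b * p a else 0)) := by
        refine sum_congr rfl fun j _ => ?_
        rw [playerCost, ← completionTime, completionTime_mul_swap p h]
        split_ifs <;> subst_vars <;> ring
    _ = coalCost p w S σ + w a * p b - w b * p a := by
        rw [sum_sub_distrib, sum_add_distrib, sum_ite_eq', sum_ite_eq', if_pos ha, if_pos hb]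
        rfl

end AdjacentSwap

namespace MoveLater

variable {n : ℕ} {i x y : Fin n} {τ σ : Equiv.Perm (Fin n)}

theorem lt_of_lt (hml : MoveLater i τ σ) (hx : x ≠ i) (h : τ x < τ y) : σ x < σ y := by
  by_cases hy : y = i
  · exact hy ▸ hml.2 x (hy ▸ h)
  · exact (hml.1 x y hx hy).1 h

theorem mul_swap_right (hml : MoveLater i τ σ) (h : σ i ⋖ σ y) :
    MoveLater i τ (σ * Equiv.swap i y) := by
  obtain ⟨hrel, hprec⟩ := hml
  rw [Fin.covBy_iff, Nat.covBy_iff_add_one_eq] at h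
  refine ⟨fun x z hx hz => ?_, fun x hx => ?_⟩
  · rw [hrel x z hx hz]
    simp only [Equiv.Perm.mul_apply]
    grind [Fin.lt_def, Fin.val_inj, Equiv.apply_eq_iff_eq]
  · have := hprec x hx
    simp only [Equiv.Perm.mul_apply]
    grind [Fin.lt_def, Fin.val_inj, Equiv.apply_eq_iff_eq]

theorem mul_swap_left (hml : MoveLater i τ σ) (hτ : τ i < τ y) (h : σ y ⋖ σ i) :
    MoveLater i τ (σ * Equiv.swap y i) := by
  obtain ⟨hrel, hprec⟩ := hml
  rw [Fin.covBy_iff, Nat.covBy_iff_add_one_eq] at h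
  refine ⟨fun x z hx hz => ?_, fun x hx => ?_⟩
  · rw [hrel x z hx hz]
    simp only [Equiv.Perm.mul_apply]
    grind [Fin.lt_def, Fin.val_inj, Equiv.apply_eq_iff_eq]
  · have := hprec x hx
    have hxy : x ≠ y := by rintro rfl; exact lt_asymm hx hτ
    simp only [Equiv.Perm.mul_apply]
    grind [Fin.lt_def, Fin.val_inj, Equiv.apply_eq_iff_eq]

theorem covBy (hml : MoveLater i τ σ) (hx : τ i < τ x) (hy : y ≠ i) (h : σ x ⋖ σ y) :
    τ x ⋖ τ y := by
  have hxi : x ≠ i := by rintro rfl; exact lt_irrefl _ hx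
  refine ⟨(hml.1 x y hxi hy).2 h.lt, fun c hxc hcy => ?_⟩
  obtain ⟨z, rfl⟩ := τ.surjective c
  have hzi : z ≠ i := by rintro rfl; exact lt_asymm hx hxc
  exact h.2 (hml.lt_of_lt hxi hxc) (hml.lt_of_lt hzi hcy)

end MoveLater

def SmithAdjacent {n : ℕ} (p w : Fin n → ℝ) (T : Set (Fin n)) (σ : Equiv.Perm (Fin n)) :
    Prop :=
  ∀ a ∈ T, ∀ b ∈ T, σ a ⋖ σ b → w b / p b ≤ w a / p a

theorem SmithAdjacent.div_le {n : ℕ} {p w : Fin n → ℝ} {T : Set (Fin n)}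
    {σ : Equiv.Perm (Fin n)} (hT : SmithAdjacent p w T σ) {j k : Fin n} (hjk : σ j ≤ σ k)
    (hbetween : ∀ x, σ j ≤ σ x → σ x ≤ σ k → x ∈ T) : w k / p k ≤ w j / p j := by
  have hmem : ∀ q ∈ Set.Icc (σ j) (σ k), σ.symm q ∈ T := fun q hq =>
    hbetween _ (by simpa using hq.1) (by simpa using hq.2)
  have hanti : AntitoneOn (fun q => w (σ.symm q) / p (σ.symm q)) (Set.Icc (σ j) (σ k)) :=
    antitoneOn_of_succ_le Set.ordConnected_Icc fun q hq hqI hsI =>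
      hT _ (hmem q hqI) _ (hmem _ hsI) (by simpa using Order.covBy_succ_of_not_isMax hq)
  simpa using hanti ⟨le_rfl, hjk⟩ ⟨hjk, le_rfl⟩ hjk

namespace GreedyStep

variable {n : ℕ} {p w : Fin n → ℝ} {S : Finset (Fin n)} {i j : Fin n}
  {τ σ : Equiv.Perm (Fin n)}

theorem div_le_of_covBy_right (hp : ∀ k, 0 < p k) (hgs : GreedyStep p w S i τ σ) (hi : i ∈ S)
    (hj : j ∈ S) (h : σ i ⋖ σ j) : w j / p j ≤ w i / p i := by
  have hopt := hgs.2.1 _ (hgs.1.mul_swap_right h)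
  rw [coalCost_mul_swap p w hi hj h] at hopt
  rw [div_le_div_iff₀ (hp j) (hp i)]
  linarith

theorem div_le_of_covBy_left (hp : ∀ k, 0 < p k) (hgs : GreedyStep p w S i τ σ) (hi : i ∈ S)
    (hj : j ∈ S) (hτ : τ i < τ j) (h : σ j ⋖ σ i) : w i / p i ≤ w j / p j := by
  have hopt := hgs.2.1 _ (hgs.1.mul_swap_left hτ h)
  rw [coalCost_mul_swap p w hj hi h] at hopt
  rw [div_le_div_iff₀ (hp i) (hp j)]
  linarith

theorem smithAdjacent_insert (hp : ∀ k, 0 < p k) (hgs : GreedyStep p w S i τ σ) (hi : i ∈ S)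
    {T : Set (Fin n)} (hTS : T ⊆ S) (hprec : ∀ x ∈ T, τ i < τ x)
    (hT : SmithAdjacent p w T τ) : SmithAdjacent p w (insert i T) σ := by
  rintro a (rfl | ha) b (rfl | hb) hab
  · exact absurd hab.lt (lt_irrefl _)
  · exact hgs.div_le_of_covBy_right hp hi (hTS hb) hab
  · exact hgs.div_le_of_covBy_left hp hi (hTS ha) (hprec a ha) hab
  · have hbi : b ≠ i := by rintro rfl; exact lt_irrefl _ (hprec _ hb)
    exact hT a ha b hb (hgs.1.covBy (hprec a ha) hbi hab)

end GreedyStep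

namespace GreedyRun

variable {n : ℕ} {p w : Fin n → ℝ} {σ0 : Equiv.Perm (Fin n)} {S : Finset (Fin n)}
  (run : GreedyRun p w σ0 S)

def processed (t : Fin (run.m + 1)) : Set (Fin n) :=
  {x | ∃ s : Fin run.m, s.castSucc < t ∧ run.enum s = x}

theorem processed_zero : run.processed 0 = ∅ := by
  ext x
  simp [processed]

theorem processed_succ (s : Fin run.m) :
    run.processed s.succ = insert (run.enum s) (run.processed s.castSucc) := by
  ext x
  simp [processed, Fin.castSucc_lt_succ_iff, le_iff_lt_or_eq, or_and_right, exists_or, eq_comm,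
    or_comm]

theorem processed_last : run.processed (Fin.last run.m) = S := by
  ext x
  simp [processed, Fin.castSucc_lt_last, run.enum_mem]

theorem processed_subset (t : Fin (run.m + 1)) : run.processed t ⊆ S := by
  rintro _ ⟨s, -, rfl⟩
  exact (run.enum_mem _).2 ⟨s, rfl⟩

theorem enum_notMem_processed (s : Fin run.m) : run.enum s ∉ run.processed s.castSucc := by
  rintro ⟨s', hs', he⟩
  exact (run.enum_inj he ▸ hs').ne rfl

theorem lt_of_notMem_processed (t : Fin (run.m + 1)) {x y : Fin n}
    (hx : x ∉ run.processed t) (h : σ0 x < σ0 y) : run.τ t x < run.τ t y := by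
  induction t using Fin.induction with
  | zero => simpa [run.τ_zero] using h
  | succ s ih =>
    rw [processed_succ, Set.mem_insert_iff, not_or] at hx
    exact (run.step s).1.lt_of_lt hx.1 (ih hx.2)

theorem enum_lt_of_mem_processed (s : Fin run.m) {x : Fin n}
    (hx : x ∈ run.processed s.castSucc) :
    run.τ s.castSucc (run.enum s) < run.τ s.castSucc x := by
  obtain ⟨s', hs', rfl⟩ := hx
  exact run.lt_of_notMem_processed _ (run.enum_notMem_processed s)
    (run.enum_desc _ _ (Fin.castSucc_lt_castSucc_iff.1 hs'))

theorem smithAdjacent_processed (hp : ∀ k, 0 < p k) (t : Fin (run.m + 1)) :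
    SmithAdjacent p w (run.processed t) (run.τ t) := by
  induction t using Fin.induction with
  | zero =>
    rw [processed_zero]
    intro a ha
    exact ha.elim
  | succ s ih =>
    rw [processed_succ]
    exact (run.step s).smithAdjacent_insert hp ((run.enum_mem _).2 ⟨s, rfl⟩)
      (run.processed_subset _) (fun _ => run.enum_lt_of_mem_processed s) ih

end GreedyRun

theorem greedy_smith_rule_general {n : ℕ} (p w : Fin n → ℝ) (hp : ∀ i, 0 < p i)
    (σ0 : Equiv.Perm (Fin n)) (S : Finset (Fin n)) (run : GreedyRun p w σ0 S)
    (j k : Fin n) (hcomp : SameComponent S run.alg j k) (hlt : run.alg j < run.alg k) :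
    w k / p k ≤ w j / p j := by
  obtain ⟨-, -, hbetween⟩ := hcomp
  have hsmith : SmithAdjacent p w S run.alg := by
    rw [← run.processed_last]
    exact run.smithAdjacent_processed hp (Fin.last run.m)
  refine hsmith.div_le hlt.le fun x hjx hxk => hbetween x ?_ ?_
  · rwa [min_eq_left hlt.le]
  · rwa [max_eq_right hlt.le]

/-- In the order produced by the greedy algorithm, any two players in the same component
of `S` respect Smith's rule: the earlier one has at least the urgency of the later one. -/
theorem greedy_smith_rule {n : ℕ} (p w : Fin n → ℝ) (hp : ∀ i, 0 < p i) (hw : ∀ i, 0 ≤ w i)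
    (σ0 : Equiv.Perm (Fin n)) (S : Finset (Fin n)) (run : GreedyRun p w σ0 S)
    (j k : Fin n) (hcomp : SameComponent S run.alg j k) (hlt : run.alg j < run.alg k) :
    w k / p k ≤ w j / p j :=
  greedy_smith_rule_general p w hp σ0 S run j k hcomp hlt
end

section
/- Let S ⊆ N be a coalition, let j, k ∈ S be distinct players with w_j > 0, w_k > 0, p_j > 0, p_k > 0 and u_j ≥ u_k, and let ∅ = W_0 ⊊ W_1 ⊊ ⋯ ⊊ W_r be a chain of subsets of N \ {j, k}. Let t* be the smallest index maximizing t ↦ δ_{kW_t}(S) and s* the smallest index maximizing t ↦ δ_{jW_t}(S). Then for every t > t* one has δ_{jW_t}(S) ≤ δ_{jW_{t*}}(S), and consequently s* ≤ t*. -/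
/-!
Adding players `i` to a set `P` changes `δ_{jP}(S)` by `δ_{ji}(S)`. For `j, k ∈ S` the terms
`1_S(i) p_j p_k w_i` cancel in `p_k δ_{ji}(S) - p_j δ_{ki}(S) = p_i (p_j w_k - p_k w_j)`, which is
`≤ 0` when `u_j ≥ u_k`. So whatever is added to `W_{t*}` cannot increase `δ_j` once it does not
increase `δ_k`, and a later maximizer of `δ_j` would tie with `W_{t*}`, contradicting minimality.
-/

/-- `δ_{jk}(S) = 1_S(k)·p_j·w_k − 1_S(j)·p_k·w_j`. -/
def delta {n : ℕ} (p w : Fin n → ℝ) (S : Finset (Fin n)) (j k : Fin n) : ℝ :=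
  (if k ∈ S then p j * w k else 0) - (if j ∈ S then p k * w j else 0)

/-- `δ_{jP}(S) = Σ_{k ∈ P} δ_{jk}(S)`. -/
def deltaSet {n : ℕ} (p w : Fin n → ℝ) (S : Finset (Fin n)) (j : Fin n)
    (P : Finset (Fin n)) : ℝ :=
  ∑ k ∈ P, delta p w S j k

section

variable {n : ℕ} {p w : Fin n → ℝ} {S : Finset (Fin n)} {j k : Fin n}

theorem mul_delta_le_mul_delta (hj : j ∈ S) (hk : k ∈ S) (hu : p j * w k ≤ p k * w j)
    {i : Fin n} (hpi : 0 ≤ p i) : p k * delta p w S j i ≤ p j * delta p w S k i := by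
  have hcross : p i * (p j * w k) ≤ p i * (p k * w j) := mul_le_mul_of_nonneg_left hu hpi
  simp only [delta, hj, hk, if_true]
  split_ifs <;> linarith

theorem mul_deltaSet_le_mul_deltaSet (hp : ∀ i, 0 ≤ p i) (hj : j ∈ S) (hk : k ∈ S)
    (hu : p j * w k ≤ p k * w j) (P : Finset (Fin n)) :
    p k * deltaSet p w S j P ≤ p j * deltaSet p w S k P := by
  simp only [deltaSet, Finset.mul_sum]
  exact Finset.sum_le_sum fun i _ => mul_delta_le_mul_delta hj hk hu (hp i)

theorem deltaSet_sdiff {P Q : Finset (Fin n)} (hPQ : P ⊆ Q) :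
    deltaSet p w S j (Q \ P) = deltaSet p w S j Q - deltaSet p w S j P :=
  Finset.sum_sdiff_eq_sub hPQ

theorem deltaSet_le_of_deltaSet_le (hp : ∀ i, 0 ≤ p i) (hj : j ∈ S) (hk : k ∈ S)
    (hpk : 0 < p k) (hu : p j * w k ≤ p k * w j) {P Q : Finset (Fin n)} (hPQ : P ⊆ Q)
    (hkQ : deltaSet p w S k Q ≤ deltaSet p w S k P) :
    deltaSet p w S j Q ≤ deltaSet p w S j P := by
  have hk_gain : deltaSet p w S k (Q \ P) ≤ 0 := by
    rw [deltaSet_sdiff hPQ]; linarith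
  have hj_gain : p k * deltaSet p w S j (Q \ P) ≤ 0 :=
    (mul_deltaSet_le_mul_deltaSet hp hj hk hu _).trans
      (mul_nonpos_of_nonneg_of_nonpos (hp j) hk_gain)
  rw [deltaSet_sdiff hPQ] at hj_gain
  exact sub_nonpos.mp (nonpos_of_mul_nonpos_right hj_gain hpk)

end

theorem greedy_maximizer_mono_general {n : ℕ} (p w : Fin n → ℝ) (hp : ∀ i, 0 ≤ p i)
    (S : Finset (Fin n)) (j k : Fin n) (hj : j ∈ S) (hk : k ∈ S)
    (hpj : 0 < p j) (hpk : 0 < p k) (hu : w k / p k ≤ w j / p j)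
    (r : ℕ) (W : Fin (r + 1) → Finset (Fin n))
    (hchain : ∀ s t : Fin (r + 1), s < t → W s ⊂ W t)
    (tstar sstar : Fin (r + 1))
    (ht_max : ∀ t, deltaSet p w S k (W t) ≤ deltaSet p w S k (W tstar))
    (hs_max : ∀ t, deltaSet p w S j (W t) ≤ deltaSet p w S j (W sstar))
    (hs_min : ∀ t, deltaSet p w S j (W t) = deltaSet p w S j (W sstar) → sstar ≤ t) :
    (∀ t, tstar < t → deltaSet p w S j (W t) ≤ deltaSet p w S j (W tstar)) ∧
      sstar ≤ tstar := by
  have hu' : p j * w k ≤ p k * w j := by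
    rw [div_le_div_iff₀ hpk hpj] at hu
    linarith
  have hlater (t : Fin (r + 1)) (ht : tstar < t) :
      deltaSet p w S j (W t) ≤ deltaSet p w S j (W tstar) :=
    deltaSet_le_of_deltaSet_le hp hj hk hpk hu' (hchain _ _ ht).subset (ht_max t)
  refine ⟨hlater, not_lt.mp fun hlt => ?_⟩
  have htie := le_antisymm (hlater sstar hlt) (hs_max tstar)
  exact (hs_min tstar htie.symm).not_gt hlt

/-- Given a chain `∅ = W_0 ⊊ W_1 ⊊ ⋯ ⊊ W_r` of subsets of `N \ {j,k}`, with `j, k ∈ S`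
distinct, `u_j ≥ u_k`, `t*` the smallest maximizer of `t ↦ δ_{kW_t}(S)` and `s*` the
smallest maximizer of `t ↦ δ_{jW_t}(S)`: every `t > t*` satisfies
`δ_{jW_t}(S) ≤ δ_{jW_{t*}}(S)`, and consequently `s* ≤ t*`. -/
theorem greedy_maximizer_mono {n : ℕ} (p w : Fin n → ℝ) (hp : ∀ i, 0 ≤ p i)
    (hw : ∀ i, 0 ≤ w i) (S : Finset (Fin n)) (j k : Fin n) (hj : j ∈ S) (hk : k ∈ S)
    (hjk : j ≠ k) (hwj : 0 < w j) (hwk : 0 < w k) (hpj : 0 < p j) (hpk : 0 < p k)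
    (hu : w k / p k ≤ w j / p j)
    (r : ℕ) (W : Fin (r + 1) → Finset (Fin n))
    (hW0 : W 0 = ∅)
    (hchain : ∀ s t : Fin (r + 1), s < t → W s ⊂ W t)
    (hWj : ∀ t, j ∉ W t) (hWk : ∀ t, k ∉ W t)
    (tstar sstar : Fin (r + 1))
    (ht_max : ∀ t, deltaSet p w S k (W t) ≤ deltaSet p w S k (W tstar))
    (ht_min : ∀ t, deltaSet p w S k (W t) = deltaSet p w S k (W tstar) → tstar ≤ t)
    (hs_max : ∀ t, deltaSet p w S j (W t) ≤ deltaSet p w S j (W sstar))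
    (hs_min : ∀ t, deltaSet p w S j (W t) = deltaSet p w S j (W sstar) → sstar ≤ t) :
    (∀ t, tstar < t → deltaSet p w S j (W t) ≤ deltaSet p w S j (W tstar)) ∧
      sstar ≤ tstar :=
  greedy_maximizer_mono_general p w hp S j k hj hk hpj hpk hu r W hchain tstar sstar ht_max hs_max
    hs_min
end

section
/- Let N be a finite set and let f, g : 2^N → ℝ be supermodular set functions such that f − g is monotone. Then the pointwise maximum max{f, g} is supermodular. -/
/-- A set function is supermodular. -/
def Supermodular {α : Type*} [DecidableEq α] (f : Finset α → ℝ) : Prop :=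
  ∀ S T : Finset α, f S + f T ≤ f (S ∪ T) + f (S ∩ T)

/-!
Write each of `max (f S) (g S)` and `max (f T) (g T)` as one of its two arguments. When both
are taken from the same function, supermodularity of that function suffices. A mixed pair
`f S + g T` is bounded by `f (S ∪ T) + g (S ∩ T)`: add the supermodularity of `g` to the
increase of `f - g` from `S` to `S ∪ T`.
-/

open Finset

theorem Supermodular.add_le_of_monotone_sub {α : Type*} [DecidableEq α] {f g : Finset α → ℝ}
    (hg : Supermodular g) (hmono : Monotone (f - g)) (S T : Finset α) :
    f S + g T ≤ f (S ∪ T) + g (S ∩ T) := by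
  have hS : f S - g S ≤ f (S ∪ T) - g (S ∪ T) := hmono subset_union_left
  linarith [hg S T]

theorem sup_supermodular_general {α : Type*} [DecidableEq α] (f g : Finset α → ℝ)
    (hf : Supermodular f) (hg : Supermodular g)
    (hmono : ∀ S T : Finset α, S ⊆ T → f S - g S ≤ f T - g T) :
    Supermodular (fun S => max (f S) (g S)) := by
  have hsub : Monotone (f - g) := fun S T h => hmono S T h
  intro S T
  have hfg := hg.add_le_of_monotone_sub hsub S T
  have hgf := hg.add_le_of_monotone_sub hsub T S
  rw [union_comm, inter_comm] at hgf
  have hU := le_max_left (f (S ∪ T)) (g (S ∪ T))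
  have hU' := le_max_right (f (S ∪ T)) (g (S ∪ T))
  have hI := le_max_left (f (S ∩ T)) (g (S ∩ T))
  have hI' := le_max_right (f (S ∩ T)) (g (S ∩ T))
  rcases max_choice (f S) (g S) with hS | hS <;> rcases max_choice (f T) (g T) with hT | hT <;>
    simp only [hS, hT] <;> linarith [hf S T, hg S T]

/-- Lovász: if `f` and `g` are supermodular and `f − g` is monotone, then
`max {f, g}` is supermodular. -/
theorem sup_supermodular {α : Type*} [DecidableEq α] [Fintype α] (f g : Finset α → ℝ)
    (hf : Supermodular f) (hg : Supermodular g)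
    (hmono : ∀ S T : Finset α, S ⊆ T → f S - g S ≤ f T - g T) :
    Supermodular (fun S => max (f S) (g S)) :=
  sup_supermodular_general f g hf hg hmono
end

section
/- Let N be a finite set, let k ≥ 1, and let g_1, …, g_k : 2^N → ℝ each be monotone and supermodular. Define f_k(S) = max_{1 ≤ r ≤ k} Σ_{j=1}^r g_j(S). Then f_k is supermodular. -/
/-- A set function is monotone. -/
def MonotoneSetFn {α : Type*} (f : Finset α → ℝ) : Prop :=
  ∀ S T : Finset α, S ⊆ T → f S ≤ f T

/-! Each prefix sum `∑_{j ≤ r} g_j` is supermodular, but a maximum of supermodular functions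
need not be. Here the maximisers `p ≤ q` for `S` and `T` can be exchanged: the longer prefix
`q` is paired with `S ∪ T` and the shorter `p` with `S ∩ T`. The common terms `j ≤ p` are handled
by supermodularity, and the surplus terms `p < j ≤ q` only grow from `T` to `S ∪ T` by
monotonicity. -/

lemma sum_add_sum_le_of_subset {ι α : Type*} [DecidableEq ι] [DecidableEq α]
    {g : ι → Finset α → ℝ} {s t : Finset ι} (hst : s ⊆ t)
    (hsup : ∀ j ∈ s, Supermodular (g j)) (hmono : ∀ j ∈ t \ s, MonotoneSetFn (g j))
    (S T : Finset α) :
    ∑ j ∈ s, g j S + ∑ j ∈ t, g j T ≤ ∑ j ∈ t, g j (S ∪ T) + ∑ j ∈ s, g j (S ∩ T) := by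
  have h_common : ∑ j ∈ s, (g j S + g j T) ≤ ∑ j ∈ s, (g j (S ∪ T) + g j (S ∩ T)) :=
    Finset.sum_le_sum fun j hj => hsup j hj S T
  have h_surplus : ∑ j ∈ t \ s, g j T ≤ ∑ j ∈ t \ s, g j (S ∪ T) :=
    Finset.sum_le_sum fun j hj => hmono j hj T (S ∪ T) Finset.subset_union_right
  rw [Finset.sum_add_distrib, Finset.sum_add_distrib] at h_common
  rw [← Finset.sum_sdiff hst (f := fun j => g j T),
    ← Finset.sum_sdiff hst (f := fun j => g j (S ∪ T))]
  linarith

lemma supermodular_sup'_of_exchange {ι α : Type*} [DecidableEq α] {I : Finset ι}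
    (hI : I.Nonempty) (F : ι → Finset α → ℝ)
    (hF : ∀ S T, ∀ p ∈ I, ∀ q ∈ I, ∃ a ∈ I, ∃ b ∈ I,
      F p S + F q T ≤ F a (S ∪ T) + F b (S ∩ T)) :
    Supermodular fun S => I.sup' hI (F · S) := by
  intro S T
  obtain ⟨p, hp, hS⟩ := Finset.exists_mem_eq_sup' hI (F · S)
  obtain ⟨q, hq, hT⟩ := Finset.exists_mem_eq_sup' hI (F · T)
  obtain ⟨a, ha, b, hb, h⟩ := hF S T p hp q hq
  simp only [hS, hT]
  exact h.trans (add_le_add (Finset.le_sup' (F · (S ∪ T)) ha) (Finset.le_sup' (F · (S ∩ T)) hb))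

theorem prefix_max_supermodular_general {α : Type*} [DecidableEq α]
    (k : ℕ) (hk : 1 ≤ k) (g : ℕ → Finset α → ℝ)
    (hmono : ∀ j, 1 ≤ j → j ≤ k → MonotoneSetFn (g j))
    (hsup : ∀ j, 1 ≤ j → j ≤ k → Supermodular (g j))
    (f : Finset α → ℝ)
    (hf : ∀ S : Finset α, f S = (Finset.Icc 1 k).sup' (Finset.nonempty_Icc.2 hk)
      (fun r => ∑ j ∈ Finset.Icc 1 r, g j S)) :
    Supermodular f := by
  have hprefix : ∀ {p q}, p ≤ q → q ≤ k → ∀ S T : Finset α,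
      ∑ j ∈ Finset.Icc 1 p, g j S + ∑ j ∈ Finset.Icc 1 q, g j T ≤
        ∑ j ∈ Finset.Icc 1 q, g j (S ∪ T) + ∑ j ∈ Finset.Icc 1 p, g j (S ∩ T) := by
    intro p q hpq hqk S T
    refine sum_add_sum_le_of_subset (Finset.Icc_subset_Icc_right hpq) (fun j hj => ?_)
      (fun j hj => ?_) S T
    · obtain ⟨h1, hj⟩ := Finset.mem_Icc.1 hj
      exact hsup j h1 (by omega)
    · obtain ⟨h1, hj⟩ := Finset.mem_Icc.1 (Finset.mem_sdiff.1 hj).1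
      exact hmono j h1 (by omega)
  rw [show f = _ from funext hf]
  refine supermodular_sup'_of_exchange _ _ fun S T p hp q hq => ?_
  have hpk := (Finset.mem_Icc.1 hp).2
  have hqk := (Finset.mem_Icc.1 hq).2
  rcases le_total p q with hpq | hqp
  · exact ⟨q, hq, p, hp, hprefix hpq hqk S T⟩
  · refine ⟨p, hp, q, hq, ?_⟩
    simpa only [add_comm, Finset.union_comm, Finset.inter_comm] using hprefix hqp hpk T S

/-- If `g_1, …, g_k` are monotone and supermodular, then
`f_k(S) = max_{1 ≤ r ≤ k} Σ_{j=1}^r g_j(S)` is supermodular. -/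
theorem prefix_max_supermodular {α : Type*} [DecidableEq α] [Fintype α]
    (k : ℕ) (hk : 1 ≤ k) (g : ℕ → Finset α → ℝ)
    (hmono : ∀ j, 1 ≤ j → j ≤ k → MonotoneSetFn (g j))
    (hsup : ∀ j, 1 ≤ j → j ≤ k → Supermodular (g j))
    (f : Finset α → ℝ)
    (hf : ∀ S : Finset α, f S = (Finset.Icc 1 k).sup' (Finset.nonempty_Icc.2 hk)
      (fun r => ∑ j ∈ Finset.Icc 1 r, g j S)) :
    Supermodular f :=
  prefix_max_supermodular_general k hk g hmono hsup f hf
end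

section
/- Let N be a finite set with p, w : N → ℝ≥0, let ≺ be a linear order on N, and fix i ∈ N. Define, for S ⊆ N, f_i(S) = max over r ∈ N with i ⪯ r of Σ_{j : i ≺ j ⪯ r} ( 1_S(j)·p_i·w_j − p_j·w_i ), where the term for r = i is the empty sum 0. Then f_i is a supermodular set function on 2^N. -/
open Finset

theorem sum_ite_mem_sub_add_le_inter_union {α : Type*} [DecidableEq α] {J J' : Finset α}
    (hJ : J ⊆ J') (A B : Finset α) {c : α → ℝ} (hc : ∀ j, 0 ≤ c j) (d : α → ℝ) :
    ∑ j ∈ J, ((if j ∈ A then c j else 0) - d j) + ∑ j ∈ J', ((if j ∈ B then c j else 0) - d j) ≤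
      ∑ j ∈ J, ((if j ∈ A ∩ B then c j else 0) - d j) +
        ∑ j ∈ J', ((if j ∈ A ∪ B then c j else 0) - d j) := by
  have extend : ∀ X : Finset α, ∑ j ∈ J, (if j ∈ X then c j else 0) =
      ∑ j ∈ J', if j ∈ J then (if j ∈ X then c j else 0) else 0 := fun X => by
    rw [sum_ite_mem J' J, inter_eq_right.mpr hJ]
  simp only [sum_sub_distrib]
  suffices ∑ j ∈ J, (if j ∈ A then c j else 0) + ∑ j ∈ J', (if j ∈ B then c j else 0) ≤
      ∑ j ∈ J, (if j ∈ A ∩ B then c j else 0) + ∑ j ∈ J', (if j ∈ A ∪ B then c j else 0) by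
    linarith
  rw [extend A, extend (A ∩ B), ← sum_add_distrib, ← sum_add_distrib]
  refine sum_le_sum fun j _ => ?_
  have hcj := hc j
  by_cases hjJ : j ∈ J <;> by_cases hjA : j ∈ A <;> by_cases hjB : j ∈ B <;>
    simp [hjJ, hjA, hjB, hcj]

theorem supermodular_sup' {α ι β : Type*} [DecidableEq α] [LinearOrder β] (key : ι → β)
    {R : Finset ι} (hR : R.Nonempty) (g : Finset α → ι → ℝ)
    (hg : ∀ A B r s, key r ≤ key s → g A r + g B s ≤ g (A ∩ B) r + g (A ∪ B) s) :
    Supermodular fun S => R.sup' hR (g S) := by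
  intro S T
  obtain ⟨r, hr, hSr⟩ := exists_mem_eq_sup' hR (g S)
  obtain ⟨s, hs, hTs⟩ := exists_mem_eq_sup' hR (g T)
  simp only [hSr, hTs]
  rcases le_total (key r) (key s) with hrs | hsr
  · have hexchange := hg S T r s hrs
    have hinter := le_sup' (g (S ∩ T)) hr
    have hunion := le_sup' (g (S ∪ T)) hs
    linarith
  · have hexchange := hg T S s r hsr
    rw [inter_comm, union_comm] at hexchange
    have hinter := le_sup' (g (S ∩ T)) hs
    have hunion := le_sup' (g (S ∪ T)) hr
    linarith

/-- For a fixed player `i` in a linearly ordered set of players (the order being given by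
the positions `σ`), the function
`f_i(S) = max_{r ⪰ i} Σ_{i ≺ j ⪯ r} (1_S(j)·p_i·w_j − p_j·w_i)` is supermodular. -/
theorem stepGain_supermodular {n : ℕ} (p w : Fin n → ℝ) (hp : ∀ x, 0 ≤ p x)
    (hw : ∀ x, 0 ≤ w x) (σ : Equiv.Perm (Fin n)) (i : Fin n)
    (f : Finset (Fin n) → ℝ)
    (hf : ∀ S : Finset (Fin n),
      f S = (Finset.univ.filter (fun r => σ i ≤ σ r)).sup'
        ⟨i, by simp⟩
        (fun r => ∑ j ∈ Finset.univ.filter (fun j => σ i < σ j ∧ σ j ≤ σ r),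
          ((if j ∈ S then p i * w j else 0) - p j * w i))) :
    Supermodular f := by
  rw [show f = _ from funext hf]
  refine supermodular_sup' σ _ _ fun A B r s hrs => ?_
  have hchain : univ.filter (fun j => σ i < σ j ∧ σ j ≤ σ r) ⊆
      univ.filter (fun j => σ i < σ j ∧ σ j ≤ σ s) :=
    monotone_filter_right _ fun _ _ hj => ⟨hj.1, hj.2.trans hrs⟩
  exact sum_ite_mem_sub_add_le_inter_union hchain A B
    (fun j => mul_nonneg (hp i) (hw j)) (fun j => p j * w i)
end
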